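/- arXiv:2201.07427 — 5 statements merged into one kernel-verified Lean document; each statement's English description precedes it below -/
import Mathlib

section
/- Let r : E₁ → ℝ and s : E₂ → ℝ be differentiable and 1-strongly convex. Let F : E₁ → ℝ and H : E₂ → ℝ be convex functions admitting a subgradient at every point, with F relatively μx-strongly convex with respect to V^r and H relatively μy-strongly convex with respect to V^s, where μx, μy > 0. Let A : E₁ → E₂ be a bounded linear operator, define φ(x,y) := F(x) + ⟨y, A x⟩ − H(y), and let (x*, y*) be a saddle point of φ on E₁ × E₂. Fix ηx, ηy > 0 and suppose the sequences (x_k)_{k≥0}, (y_k)_{k≥0} satisfy the proximal point rule: for every k ≥ 0, x_{k+1} is a global minimizer of x ↦ ⟨Aᵀ y_{k+1}, x⟩ + (1/ηx) V^r_{x_k}(x) + F(x), and y_{k+1} is a global minimizer of y ↦ −⟨A x_{k+1}, y⟩ + (1/ηy) V^s_{y_k}(y) + H(y). Then, with κ := 1/min(μx ηx, μy ηy), for every K ≥ 0: ‖x* − x_K‖²/ηx + ‖y* − y_K‖²/ηy ≤ 2 exp(−K/(1+κ)) · (V^r_{x₀}(x*)/ηx + V^s_{y₀}(y*)/ηy).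 -/
/-- Bregman divergence V^r_x(x') = r(x') − r(x) − ⟨∇r(x), x' − x⟩,
given a gradient function `r'` for `r`. -/
noncomputable def breg {E : Type*} [NormedAddCommGroup E] [InnerProductSpace ℝ E]
    (r : E → ℝ) (r' : E → E) (x x' : E) : ℝ :=
  r x' - r x - (inner ℝ (r' x) (x' - x) : ℝ)

/-!
The first-order optimality condition of each proximal subproblem exhibits a subgradient of `F`
at `x_{k+1}` (and of `H` at `y_{k+1}`). Feeding it into relative strong convexity and expanding
with the three-point identity for Bregman divergences gives two inequalities whose sum, after the
bilinear terms cancel, is bounded by the duality gap at `(x_{k+1}, y_{k+1})`, which is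
nonnegative at a saddle point. Hence `Φ_k = V^r_{x_k}(x*)/ηx + V^s_{y_k}(y*)/ηy` satisfies
`(1 + δ) Φ_{k+1} ≤ Φ_k` with `δ = min (μx ηx) (μy ηy)`, and `(1 + δ)⁻¹ ≤ exp (-1/(1 + 1/δ))`.
Finally `½‖x* - x_K‖² ≤ V^r_{x_K}(x*)` because `r` is 1-strongly convex, and likewise for `s`.
-/

open Set
open scoped RealInnerProductSpace

section SingleSpace

variable {E : Type*} [NormedAddCommGroup E] [InnerProductSpace ℝ E]

def IsSubgradient (F : E → ℝ) (g x : E) : Prop :=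
  ∀ z, F x + ⟪g, z - x⟫ ≤ F z

theorem inner_sub_breg_three_point (r : E → ℝ) (r' : E → E) (x₀ u z : E) :
    ⟪r' u - r' x₀, z - u⟫ = breg r r' x₀ z - breg r r' u z - breg r r' x₀ u := by
  simp only [breg, inner_sub_left, inner_sub_right]
  ring

theorem breg_half_norm_sq (a b : E) :
    breg (fun x => 1 / 2 * ‖x‖ ^ 2) id a b = 1 / 2 * ‖b - a‖ ^ 2 := by
  simp only [breg, id, inner_sub_right, real_inner_self_eq_norm_sq, norm_sub_sq_real,
    real_inner_comm a b]
  ring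

theorem breg_sub (r q : E → ℝ) (r' q' : E → E) (a b : E) :
    breg (fun x => r x - q x) (fun x => r' x - q' x) a b = breg r r' a b - breg q q' a b := by
  simp only [breg, inner_sub_left]
  ring

theorem ConvexOn.le_add_mul_sub {F : E → ℝ} (hF : ConvexOn ℝ univ F) (u z : E) {t : ℝ}
    (ht₀ : 0 ≤ t) (ht₁ : t ≤ 1) : F (u + t • (z - u)) ≤ F u + t * (F z - F u) := by
  have h := hF.2 (mem_univ u) (mem_univ z) (sub_nonneg.2 ht₁) ht₀ (sub_add_cancel 1 t)
  rw [show (1 - t) • u + t • z = u + t • (z - u) by module, smul_eq_mul, smul_eq_mul] at h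
  linarith

variable [CompleteSpace E]

theorem HasGradientAt.add {f g : E → ℝ} {f' g' x : E} (hf : HasGradientAt f f' x)
    (hg : HasGradientAt g g' x) : HasGradientAt (fun y => f y + g y) (f' + g') x := by
  rw [hasGradientAt_iff_hasFDerivAt, map_add]
  exact hf.hasFDerivAt.add hg.hasFDerivAt

theorem HasGradientAt.sub {f g : E → ℝ} {f' g' x : E} (hf : HasGradientAt f f' x)
    (hg : HasGradientAt g g' x) : HasGradientAt (fun y => f y - g y) (f' - g') x := by
  rw [hasGradientAt_iff_hasFDerivAt, map_sub]
  exact hf.hasFDerivAt.sub hg.hasFDerivAt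

theorem HasGradientAt.const_mul {f : E → ℝ} {f' x : E} (c : ℝ) (hf : HasGradientAt f f' x) :
    HasGradientAt (fun y => c * f y) (c • f') x := by
  rw [hasGradientAt_iff_hasFDerivAt, map_smul]
  exact hf.hasFDerivAt.const_mul c

theorem HasGradientAt.neg {f : E → ℝ} {f' x : E} (hf : HasGradientAt f f' x) :
    HasGradientAt (fun y => -f y) (-f') x := by
  rw [hasGradientAt_iff_hasFDerivAt, map_neg]
  exact hf.hasFDerivAt.neg

theorem hasGradientAt_inner_right (a x : E) : HasGradientAt (fun y => ⟪a, y⟫) a x :=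
  (InnerProductSpace.toDual ℝ E a).hasFDerivAt

theorem hasGradientAt_half_norm_sq (x : E) : HasGradientAt (fun y => 1 / 2 * ‖y‖ ^ 2) x x := by
  have h : HasGradientAt (fun y => ‖y‖ ^ 2) (x + x) x := by
    rw [hasGradientAt_iff_hasFDerivAt, map_add, ← two_nsmul]
    exact (hasStrictFDerivAt_norm_sq x).hasFDerivAt
  convert h.const_mul (1 / 2) using 1
  module

theorem hasGradientAt_breg {r : E → ℝ} {r' : E → E} {x : E} (hr : HasGradientAt r (r' x) x)
    (x₀ : E) :
    HasGradientAt (breg r r' x₀) (r' x - r' x₀) x := by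
  convert (hr.sub (hasGradientAt_inner_right (r' x₀) x)).add
    (hasGradientAt_const x (⟪r' x₀, x₀⟫ - r x₀)) using 1
  · funext y
    simp only [breg, inner_sub_right]
    ring
  · rw [add_zero]

theorem HasGradientAt.le_inner_of_forall_mul_le {ψ : E → ℝ} {g u v : E} {c : ℝ}
    (hψ : HasGradientAt ψ g u) (h : ∀ t ∈ Ioo (0 : ℝ) 1, t * c ≤ ψ (u + t • v) - ψ u) :
    c ≤ ⟪g, v⟫ := by
  have hline : HasLineDerivAt ℝ ψ ⟪g, v⟫ u v := by
    simpa using hψ.hasFDerivAt.hasLineDerivAt v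
  refine ge_of_tendsto ((hasLineDerivAt_iff_tendsto_slope_zero.mp hline).mono_left
    (nhdsWithin_mono 0 (show Ioi (0 : ℝ) ⊆ {0}ᶜ from fun _ ht => ht.ne'))) ?_
  filter_upwards [Ioo_mem_nhdsGT one_pos] with t ht
  rw [smul_eq_mul, le_inv_mul_iff₀ ht.1]
  exact h t ht

theorem ConvexOn.isSubgradient_of_hasGradientAt {h : E → ℝ} {g u : E}
    (hh : ConvexOn ℝ univ h) (hg : HasGradientAt h g u) : IsSubgradient h g u := by
  intro z
  have key := hg.neg.le_inner_of_forall_mul_le (v := z - u) (c := h u - h z) fun t ht => by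
    linarith [hh.le_add_mul_sub u z ht.1.le ht.2.le]
  rw [inner_neg_left] at key
  linarith

theorem ConvexOn.isSubgradient_neg_of_isMinOn_add {F ψ : E → ℝ} {g u : E}
    (hF : ConvexOn ℝ univ F) (hψ : HasGradientAt ψ g u) (hmin : IsMinOn (ψ + F) univ u) :
    IsSubgradient F (-g) u := by
  intro z
  have key := hψ.le_inner_of_forall_mul_le (v := z - u) (c := F u - F z) fun t ht => by
    have := isMinOn_univ_iff.1 hmin (u + t • (z - u))
    simp only [Pi.add_apply] at this
    linarith [hF.le_add_mul_sub u z ht.1.le ht.2.le]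
  rw [inner_neg_left]
  linarith

theorem half_norm_sq_le_breg {r : E → ℝ} {r' : E → E} (hr : ∀ x, HasGradientAt r (r' x) x)
    (hr₁ : ConvexOn ℝ univ fun x => r x - 1 / 2 * ‖x‖ ^ 2) (a b : E) :
    1 / 2 * ‖b - a‖ ^ 2 ≤ breg r r' a b := by
  have hsub := hr₁.isSubgradient_of_hasGradientAt ((hr a).sub (hasGradientAt_half_norm_sq a)) b
  have hsplit := breg_sub r (fun x => 1 / 2 * ‖x‖ ^ 2) r' id a b
  rw [breg_half_norm_sq] at hsplit
  have hnonneg : 0 ≤ breg (fun x => r x - 1 / 2 * ‖x‖ ^ 2) (fun x => r' x - id x) a b := by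
    simp only [breg, id]
    linarith
  linarith

theorem breg_nonneg {r : E → ℝ} {r' : E → E} (hr : ∀ x, HasGradientAt r (r' x) x)
    (hr₁ : ConvexOn ℝ univ fun x => r x - 1 / 2 * ‖x‖ ^ 2) (a b : E) : 0 ≤ breg r r' a b :=
  le_trans (by positivity) (half_norm_sq_le_breg hr hr₁ a b)

theorem prox_add_breg_le {r : E → ℝ} {r' : E → E} {F : E → ℝ} {μ τ : ℝ} {c x₀ u : E}
    (hr : ∀ x, HasGradientAt r (r' x) x) (hF : ConvexOn ℝ univ F)
    (hFrel : ∀ x x' g, IsSubgradient F g x → F x + ⟪g, x' - x⟫ + μ * breg r r' x x' ≤ F x')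
    (hmin : ∀ z, ⟪c, u⟫ + τ * breg r r' x₀ u + F u ≤ ⟪c, z⟫ + τ * breg r r' x₀ z + F z)
    (z : E) :
    ⟪c, u⟫ + τ * breg r r' x₀ u + F u + (τ + μ) * breg r r' u z
      ≤ ⟪c, z⟫ + τ * breg r r' x₀ z + F z := by
  have hψ : HasGradientAt (fun w => ⟪c, w⟫ + τ * breg r r' x₀ w) (c + τ • (r' u - r' x₀)) u :=
    (hasGradientAt_inner_right c u).add ((hasGradientAt_breg (hr u) x₀).const_mul τ)
  have key := hFrel u z _ (hF.isSubgradient_neg_of_isMinOn_add hψ (isMinOn_univ_iff.2 hmin))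
  rw [inner_neg_left, inner_add_left, real_inner_smul_left, inner_sub_breg_three_point,
    inner_sub_right] at key
  linarith

end SingleSpace

theorem breg_add_breg_le_of_prox_point_step {E₁ E₂ : Type*}
    [NormedAddCommGroup E₁] [InnerProductSpace ℝ E₁] [CompleteSpace E₁]
    [NormedAddCommGroup E₂] [InnerProductSpace ℝ E₂] [CompleteSpace E₂]
    {r : E₁ → ℝ} {r' : E₁ → E₁} {s : E₂ → ℝ} {s' : E₂ → E₂}
    {F : E₁ → ℝ} {H : E₂ → ℝ} {μx μy ηx ηy : ℝ} {A : E₁ →L[ℝ] E₂}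
    {xstar xk u : E₁} {ystar yk v : E₂}
    (hr : ∀ x, HasGradientAt r (r' x) x) (hs : ∀ y, HasGradientAt s (s' y) y)
    (hr₁ : ConvexOn ℝ univ fun x => r x - 1 / 2 * ‖x‖ ^ 2)
    (hs₁ : ConvexOn ℝ univ fun y => s y - 1 / 2 * ‖y‖ ^ 2)
    (hF : ConvexOn ℝ univ F) (hH : ConvexOn ℝ univ H)
    (hFrel : ∀ x x' g, IsSubgradient F g x → F x + ⟪g, x' - x⟫ + μx * breg r r' x x' ≤ F x')
    (hHrel : ∀ y y' g, IsSubgradient H g y → H y + ⟪g, y' - y⟫ + μy * breg s s' y y' ≤ H y')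
    (hgap : F xstar + ⟪v, A xstar⟫ - H v ≤ F u + ⟪ystar, A u⟫ - H ystar)
    (hηx : 0 < ηx) (hηy : 0 < ηy)
    (hxmin : ∀ z, ⟪A.adjoint v, u⟫ + 1 / ηx * breg r r' xk u + F u
      ≤ ⟪A.adjoint v, z⟫ + 1 / ηx * breg r r' xk z + F z)
    (hymin : ∀ w, -⟪A u, v⟫ + 1 / ηy * breg s s' yk v + H v
      ≤ -⟪A u, w⟫ + 1 / ηy * breg s s' yk w + H w) :
    (1 / ηx + μx) * breg r r' u xstar + (1 / ηy + μy) * breg s s' v ystar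
      ≤ breg r r' xk xstar / ηx + breg s s' yk ystar / ηy := by
  have hx := prox_add_breg_le hr hF hFrel hxmin xstar
  have hy := prox_add_breg_le (c := -A u) hs hH hHrel
    (fun w => by simpa only [inner_neg_left] using hymin w) ystar
  rw [ContinuousLinearMap.adjoint_inner_left, ContinuousLinearMap.adjoint_inner_left] at hx
  rw [inner_neg_left, inner_neg_left, real_inner_comm v (A u), real_inner_comm ystar (A u)] at hy
  have hxk := mul_nonneg (one_div_nonneg.2 hηx.le) (breg_nonneg hr hr₁ xk u)
  have hyk := mul_nonneg (one_div_nonneg.2 hηy.le) (breg_nonneg hs hs₁ yk v)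
  rw [div_eq_mul_one_div (breg r r' xk xstar), div_eq_mul_one_div (breg s s' yk ystar)]
  -- in `hx + hy` the terms `⟪v, A u⟫` cancel and what remains of `F`, `H` is the gap `hgap`
  linarith

theorem one_add_mul_div_le {δ μ η V : ℝ} (hη : 0 < η) (hV : 0 ≤ V) (hδ : δ ≤ μ * η) :
    (1 + δ) * (V / η) ≤ (1 / η + μ) * V := by
  rw [show (1 / η + μ) * V = (1 + μ * η) * (V / η) by field_simp]
  exact mul_le_mul_of_nonneg_right (by linarith) (div_nonneg hV hη.le)

theorem pow_mul_le_of_forall_mul_succ_le {q : ℝ} {a : ℕ → ℝ} (hq : 0 ≤ q)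
    (h : ∀ k, q * a (k + 1) ≤ a k) (K : ℕ) : q ^ K * a K ≤ a 0 := by
  induction K with
  | zero => simp
  | succ K ih =>
    calc q ^ (K + 1) * a (K + 1) = q ^ K * (q * a (K + 1)) := by ring
      _ ≤ q ^ K * a K := by gcongr; exact h K
      _ ≤ a 0 := ih

theorem exp_div_one_add_inv_le_one_add_pow {δ : ℝ} (hδ : 0 < δ) (K : ℕ) :
    Real.exp (K / (1 + 1 / δ)) ≤ (1 + δ) ^ K := by
  have hlog : 1 / (1 + 1 / δ) ≤ Real.log (1 + δ) := by
    convert Real.one_sub_inv_le_log_of_pos (by linarith : 0 < 1 + δ) using 1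
    field_simp
    ring
  calc Real.exp (K / (1 + 1 / δ)) = Real.exp (1 / (1 + 1 / δ)) ^ K := by
        rw [← Real.exp_nat_mul]
        ring_nf
    _ ≤ Real.exp (Real.log (1 + δ)) ^ K := by gcongr
    _ = (1 + δ) ^ K := by rw [Real.exp_log (by linarith)]

theorem le_exp_neg_div_mul_of_forall_one_add_mul_le {δ : ℝ} {a : ℕ → ℝ} (hδ : 0 < δ)
    (ha : ∀ k, 0 ≤ a k) (h : ∀ k, (1 + δ) * a (k + 1) ≤ a k) (K : ℕ) :
    a K ≤ Real.exp (-K / (1 + 1 / δ)) * a 0 := by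
  have hpow := pow_mul_le_of_forall_mul_succ_le (by linarith) h K
  have hexp := exp_div_one_add_inv_le_one_add_pow hδ K
  calc a K = Real.exp (-K / (1 + 1 / δ)) * (Real.exp (K / (1 + 1 / δ)) * a K) := by
        rw [← mul_assoc, ← Real.exp_add, neg_div, neg_add_cancel, Real.exp_zero, one_mul]
    _ ≤ Real.exp (-K / (1 + 1 / δ)) * ((1 + δ) ^ K * a K) := by gcongr; exact ha K
    _ ≤ Real.exp (-K / (1 + 1 / δ)) * a 0 := by gcongr

theorem stmt0_general {E₁ E₂ : Type*}
    [NormedAddCommGroup E₁] [InnerProductSpace ℝ E₁] [CompleteSpace E₁]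
    [NormedAddCommGroup E₂] [InnerProductSpace ℝ E₂] [CompleteSpace E₂]
    -- r, s differentiable and 1-strongly convex
    (r : E₁ → ℝ) (r' : E₁ → E₁) (s : E₂ → ℝ) (s' : E₂ → E₂)
    (hrgrad : ∀ x, HasGradientAt r (r' x) x)
    (hsgrad : ∀ y, HasGradientAt s (s' y) y)
    (hrsc : ConvexOn ℝ Set.univ (fun x => r x - 1 / 2 * ‖x‖ ^ 2))
    (hssc : ConvexOn ℝ Set.univ (fun y => s y - 1 / 2 * ‖y‖ ^ 2))
    -- F, H convex with subgradients everywhere, relatively strongly convex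
    (F : E₁ → ℝ) (H : E₂ → ℝ) (μx μy : ℝ) (hμx : 0 < μx) (hμy : 0 < μy)
    (hFconv : ConvexOn ℝ Set.univ F) (hHconv : ConvexOn ℝ Set.univ H)
    (hFrel : ∀ x x' : E₁, ∀ g : E₁, (∀ z, F x + (inner ℝ g (z - x) : ℝ) ≤ F z) →
      F x + (inner ℝ g (x' - x) : ℝ) + μx * breg r r' x x' ≤ F x')
    (hHrel : ∀ y y' : E₂, ∀ g : E₂, (∀ z, H y + (inner ℝ g (z - y) : ℝ) ≤ H z) →
      H y + (inner ℝ g (y' - y) : ℝ) + μy * breg s s' y y' ≤ H y')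
    -- bilinear coupling and saddle point of φ(x,y) = F(x) + ⟨y, Ax⟩ − H(y)
    (A : E₁ →L[ℝ] E₂) (xstar : E₁) (ystar : E₂)
    (hsaddle : ∀ (x : E₁) (y : E₂),
      F xstar + (inner ℝ y (A xstar) : ℝ) - H y
          ≤ F xstar + (inner ℝ ystar (A xstar) : ℝ) - H ystar ∧
      F xstar + (inner ℝ ystar (A xstar) : ℝ) - H ystar
          ≤ F x + (inner ℝ ystar (A x) : ℝ) - H ystar)
    -- step sizes and the proximal point iterates
    (ηx ηy : ℝ) (hηx : 0 < ηx) (hηy : 0 < ηy)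
    (x : ℕ → E₁) (y : ℕ → E₂)
    (hxmin : ∀ k : ℕ, ∀ z : E₁,
      (inner ℝ ((ContinuousLinearMap.adjoint A) (y (k + 1))) (x (k + 1)) : ℝ)
          + 1 / ηx * breg r r' (x k) (x (k + 1)) + F (x (k + 1))
        ≤ (inner ℝ ((ContinuousLinearMap.adjoint A) (y (k + 1))) z : ℝ)
          + 1 / ηx * breg r r' (x k) z + F z)
    (hymin : ∀ k : ℕ, ∀ w : E₂,
      -(inner ℝ (A (x (k + 1))) (y (k + 1)) : ℝ)
          + 1 / ηy * breg s s' (y k) (y (k + 1)) + H (y (k + 1))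
        ≤ -(inner ℝ (A (x (k + 1))) w : ℝ)
          + 1 / ηy * breg s s' (y k) w + H w) :
    ∀ K : ℕ,
      ‖xstar - x K‖ ^ 2 / ηx + ‖ystar - y K‖ ^ 2 / ηy
        ≤ 2 * Real.exp (-(K : ℝ) / (1 + 1 / min (μx * ηx) (μy * ηy)))
          * (breg r r' (x 0) xstar / ηx + breg s s' (y 0) ystar / ηy) := by
  intro K
  set δ := min (μx * ηx) (μy * ηy)
  set Φ : ℕ → ℝ := fun k => breg r r' (x k) xstar / ηx + breg s s' (y k) ystar / ηy
  have hΦ : ∀ k, 0 ≤ Φ k := fun k => add_nonneg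
    (div_nonneg (breg_nonneg hrgrad hrsc _ _) hηx.le)
    (div_nonneg (breg_nonneg hsgrad hssc _ _) hηy.le)
  have hcontract : ∀ k, (1 + δ) * Φ (k + 1) ≤ Φ k := fun k => by
    obtain ⟨hmax, hmin⟩ := hsaddle (x (k + 1)) (y (k + 1))
    have hstep := breg_add_breg_le_of_prox_point_step hrgrad hsgrad hrsc hssc hFconv hHconv
      hFrel hHrel (hmax.trans hmin) hηx hηy (hxmin k) (hymin k)
    have hxδ := one_add_mul_div_le hηx (breg_nonneg hrgrad hrsc (x (k + 1)) xstar)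
      (min_le_left (μx * ηx) (μy * ηy))
    have hyδ := one_add_mul_div_le hηy (breg_nonneg hsgrad hssc (y (k + 1)) ystar)
      (min_le_right (μx * ηx) (μy * ηy))
    simp only [Φ, mul_add]
    linarith
  have hnorm : ‖xstar - x K‖ ^ 2 / ηx + ‖ystar - y K‖ ^ 2 / ηy ≤ 2 * Φ K := by
    have hx := half_norm_sq_le_breg hrgrad hrsc (x K) xstar
    have hy := half_norm_sq_le_breg hsgrad hssc (y K) ystar
    simp only [Φ, mul_add, mul_div_assoc']
    gcongr <;> linarith
  calc _ ≤ 2 * Φ K := hnorm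
    _ ≤ 2 * (Real.exp (-(K : ℝ) / (1 + 1 / δ)) * Φ 0) := by
      gcongr
      exact le_exp_neg_div_mul_of_forall_one_add_mul_le
        (lt_min (mul_pos hμx hηx) (mul_pos hμy hηy)) hΦ hcontract K
    _ = _ := by ring

/-- linear convergence of the proximal point method for the
bilinearly coupled minimax problem min_x max_y F(x) + ⟨y, Ax⟩ − H(y). -/
theorem stmt0 {E₁ E₂ : Type*}
    [NormedAddCommGroup E₁] [InnerProductSpace ℝ E₁] [CompleteSpace E₁]
    [NormedAddCommGroup E₂] [InnerProductSpace ℝ E₂] [CompleteSpace E₂]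
    -- r, s differentiable and 1-strongly convex
    (r : E₁ → ℝ) (r' : E₁ → E₁) (s : E₂ → ℝ) (s' : E₂ → E₂)
    (hrgrad : ∀ x, HasGradientAt r (r' x) x)
    (hsgrad : ∀ y, HasGradientAt s (s' y) y)
    (hrsc : ConvexOn ℝ Set.univ (fun x => r x - 1 / 2 * ‖x‖ ^ 2))
    (hssc : ConvexOn ℝ Set.univ (fun y => s y - 1 / 2 * ‖y‖ ^ 2))
    -- F, H convex with subgradients everywhere, relatively strongly convex
    (F : E₁ → ℝ) (H : E₂ → ℝ) (μx μy : ℝ) (hμx : 0 < μx) (hμy : 0 < μy)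
    (hFconv : ConvexOn ℝ Set.univ F) (hHconv : ConvexOn ℝ Set.univ H)
    (hFsub : ∀ x : E₁, ∃ g : E₁, ∀ z, F x + (inner ℝ g (z - x) : ℝ) ≤ F z)
    (hHsub : ∀ y : E₂, ∃ g : E₂, ∀ z, H y + (inner ℝ g (z - y) : ℝ) ≤ H z)
    (hFrel : ∀ x x' : E₁, ∀ g : E₁, (∀ z, F x + (inner ℝ g (z - x) : ℝ) ≤ F z) →
      F x + (inner ℝ g (x' - x) : ℝ) + μx * breg r r' x x' ≤ F x')
    (hHrel : ∀ y y' : E₂, ∀ g : E₂, (∀ z, H y + (inner ℝ g (z - y) : ℝ) ≤ H z) →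
      H y + (inner ℝ g (y' - y) : ℝ) + μy * breg s s' y y' ≤ H y')
    -- bilinear coupling and saddle point of φ(x,y) = F(x) + ⟨y, Ax⟩ − H(y)
    (A : E₁ →L[ℝ] E₂) (xstar : E₁) (ystar : E₂)
    (hsaddle : ∀ (x : E₁) (y : E₂),
      F xstar + (inner ℝ y (A xstar) : ℝ) - H y
          ≤ F xstar + (inner ℝ ystar (A xstar) : ℝ) - H ystar ∧
      F xstar + (inner ℝ ystar (A xstar) : ℝ) - H ystar
          ≤ F x + (inner ℝ ystar (A x) : ℝ) - H ystar)
    -- step sizes and the proximal point iterates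
    (ηx ηy : ℝ) (hηx : 0 < ηx) (hηy : 0 < ηy)
    (x : ℕ → E₁) (y : ℕ → E₂)
    (hxmin : ∀ k : ℕ, ∀ z : E₁,
      (inner ℝ ((ContinuousLinearMap.adjoint A) (y (k + 1))) (x (k + 1)) : ℝ)
          + 1 / ηx * breg r r' (x k) (x (k + 1)) + F (x (k + 1))
        ≤ (inner ℝ ((ContinuousLinearMap.adjoint A) (y (k + 1))) z : ℝ)
          + 1 / ηx * breg r r' (x k) z + F z)
    (hymin : ∀ k : ℕ, ∀ w : E₂,
      -(inner ℝ (A (x (k + 1))) (y (k + 1)) : ℝ)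
          + 1 / ηy * breg s s' (y k) (y (k + 1)) + H (y (k + 1))
        ≤ -(inner ℝ (A (x (k + 1))) w : ℝ)
          + 1 / ηy * breg s s' (y k) w + H w) :
    ∀ K : ℕ,
      ‖xstar - x K‖ ^ 2 / ηx + ‖ystar - y K‖ ^ 2 / ηy
        ≤ 2 * Real.exp (-(K : ℝ) / (1 + 1 / min (μx * ηx) (μy * ηy)))
          * (breg r r' (x 0) xstar / ηx + breg s s' (y 0) ystar / ηy) :=
  stmt0_general r r' s s' hrgrad hsgrad hrsc hssc F H μx μy hμx hμy hFconv hHconv hFrel hHrel A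
    xstar ystar hsaddle ηx ηy hηx hηy x y hxmin hymin
end

section
/- Let r : E₁ → ℝ and s : E₂ → ℝ be differentiable and 1-strongly convex. Let F : E₁ → ℝ and H : E₂ → ℝ be convex functions admitting a subgradient at every point, with F relatively μx-strongly convex with respect to V^r and H relatively μy-strongly convex with respect to V^s, where μx, μy > 0. Let A : E₁ → E₂ be a bounded linear operator with ‖A‖ > 0, define φ(x,y) := F(x) + ⟨y, A x⟩ − H(y), and let (x*, y*) be a saddle point of φ on E₁ × E₂. Set ηx := √(μy/μx)/(2‖A‖), ηy := √(μx/μy)/(2‖A‖), κ := 2‖A‖/√(μx μy), and θ := κ/(κ+1). Suppose the sequences (x_k)_{k≥0}, (y_k)_{k≥−1} satisfy y_{−1} = y₀ and the primal–dual rule: for every k ≥ 0, with ỹ_{k+1} := y_k + θ (y_k − y_{k−1}), x_{k+1} is a global minimizer of x ↦ ⟨Aᵀ ỹ_{k+1}, x⟩ + (1/ηx) V^r_{x_k}(x) + F(x), and y_{k+1} is a global minimizer of y ↦ −⟨A x_{k+1}, y⟩ + (1/ηy) V^s_{y_k}(y) + H(y). Then for every K ≥ 0: ‖x* − x_K‖²/(2ηx)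 + ‖y* − y_K‖²/ηy ≤ 2 exp(−K/(1+κ)) · (V^r_{x₀}(x*)/ηx + V^s_{y₀}(y*)/ηy). -/
open Set Filter Topology
open scoped RealInnerProductSpace

section FirstOrder

variable {E : Type*} [NormedAddCommGroup E] [NormedSpace ℝ E]

theorem ConvexOn.sub_le_of_hasFDerivAt_of_forall_add_le {φ ρ : E → ℝ} {ρ' : E →L[ℝ] ℝ} {p : E}
    (hφ : ConvexOn ℝ univ φ) (hρ : HasFDerivAt ρ ρ' p) (hmin : ∀ z, φ p + ρ p ≤ φ z + ρ z)
    (z : E) : φ p - ρ' (z - p) ≤ φ z := by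
  set d := z - p
  have hline : HasDerivAt (fun t : ℝ => p + t • d) d 0 := by
    simpa using ((hasDerivAt_id (0 : ℝ)).smul_const d).const_add p
  have hρline : HasDerivAt (fun t : ℝ => ρ (p + t • d)) (ρ' d) 0 :=
    hρ.comp_hasDerivAt_of_eq 0 hline (by simp)
  have hslope := (hasDerivAt_iff_tendsto_slope.mp hρline).mono_left (nhdsGT_le_nhdsNE 0)
  have hbound : ∀ t ∈ Ioo (0 : ℝ) 1, φ p - φ z ≤ slope (fun t => ρ (p + t • d)) 0 t := by
    rintro t ⟨ht0, ht1⟩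
    have hconv : φ (p + t • d) ≤ (1 - t) * φ p + t * φ z := by
      have := hφ.2 (mem_univ p) (mem_univ z) (sub_nonneg.2 ht1.le) ht0.le (sub_add_cancel 1 t)
      rwa [show (1 - t) • p + t • z = p + t • d by simp only [d]; module] at this
    have hmin_t := hmin (p + t • d)
    rw [slope_def_field, zero_smul, add_zero, sub_zero, le_div_iff₀ ht0]
    linarith
  have := ge_of_tendsto hslope (by filter_upwards [Ioo_mem_nhdsGT one_pos] using hbound)
  linarith

-- The previous lemma with `ρ = -f`: every point minimises `f + ρ = 0`.
theorem ConvexOn.add_le_of_hasFDerivAt {f : E → ℝ} {f' : E →L[ℝ] ℝ} {x : E}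
    (hf : ConvexOn ℝ univ f) (hf' : HasFDerivAt f f' x) (z : E) : f x + f' (z - x) ≤ f z := by
  have := hf.sub_le_of_hasFDerivAt_of_forall_add_le hf'.neg (by simp) z
  simp only [neg_apply, sub_neg_eq_add] at this
  exact this

end FirstOrder

section Bregman

variable {E : Type*} [NormedAddCommGroup E] [InnerProductSpace ℝ E]

theorem HasGradientAt.hasFDerivAt_innerSL [CompleteSpace E] {f : E → ℝ} {g x : E}
    (h : HasGradientAt f g x) : HasFDerivAt f (innerSL ℝ g) x :=
  hasGradientAt_iff_hasFDerivAt.mp h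

theorem add_mul_breg_le_of_forall_le [CompleteSpace E] {r ψ : E → ℝ} {r' : E → E} {m : ℝ} {p : E}
    (hr : HasGradientAt r (r' p) p) (hψ : ConvexOn ℝ univ fun z => ψ z - m * r z)
    (hp : ∀ z, ψ p ≤ ψ z) (z : E) : ψ p + m * breg r r' p z ≤ ψ z := by
  have := hψ.sub_le_of_hasFDerivAt_of_forall_add_le (hr.hasFDerivAt_innerSL.const_mul m)
    (by simpa using hp) z
  simp only [smul_apply, innerSL_apply_apply, smul_eq_mul] at this
  rw [breg]
  linarith

theorem half_norm_sub_sq_le_breg [CompleteSpace E] {r : E → ℝ} {r' : E → E} {u : E}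
    (hr : HasGradientAt r (r' u) u)
    (hsc : ConvexOn ℝ univ fun x => r x - 1 / 2 * ‖x‖ ^ 2) (v : E) :
    1 / 2 * ‖v - u‖ ^ 2 ≤ breg r r' u v := by
  have := hsc.add_le_of_hasFDerivAt
    (hr.hasFDerivAt_innerSL.sub ((hasStrictFDerivAt_norm_sq u).hasFDerivAt.const_mul (1 / 2))) v
  simp only [sub_apply, smul_apply, innerSL_apply_apply, smul_eq_mul, nsmul_eq_mul] at this
  rw [breg, ← real_inner_self_eq_norm_sq]
  rw [← real_inner_self_eq_norm_sq, ← real_inner_self_eq_norm_sq] at this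
  simp only [inner_sub_left, inner_sub_right, real_inner_comm u v] at this ⊢
  linarith

theorem convexOn_univ_of_forall_exists_subgradient {f : E → ℝ}
    (h : ∀ x, ∃ g : E, ∀ z, f x + ⟪g, z - x⟫ ≤ f z) : ConvexOn ℝ univ f := by
  refine ⟨convex_univ, fun u _ v _ a b ha hb hab => ?_⟩
  obtain ⟨g, hg⟩ := h (a • u + b • v)
  have hzero : a * ⟪g, u - (a • u + b • v)⟫ + b * ⟪g, v - (a • u + b • v)⟫ = 0 := by
    rw [← real_inner_smul_right, ← real_inner_smul_right, ← inner_add_right]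
    convert inner_zero_right g
    linear_combination (norm := module) -(hab • (a • u + b • v))
  have hsplit : f (a • u + b • v) = a * f (a • u + b • v) + b * f (a • u + b • v) := by
    rw [← add_mul, hab, one_mul]
  simp only [smul_eq_mul]
  linarith [mul_le_mul_of_nonneg_left (hg u) ha, mul_le_mul_of_nonneg_left (hg v) hb]

theorem convexOn_sub_mul_of_relStrongConvex {F r : E → ℝ} {r' : E → E} {μ : ℝ}
    (hFsub : ∀ x, ∃ g : E, ∀ z, F x + ⟪g, z - x⟫ ≤ F z)
    (hFrel : ∀ x x' g : E, (∀ z, F x + ⟪g, z - x⟫ ≤ F z) →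
      F x + ⟪g, x' - x⟫ + μ * breg r r' x x' ≤ F x') :
    ConvexOn ℝ univ fun z => F z - μ * r z := by
  refine convexOn_univ_of_forall_exists_subgradient fun w => ?_
  obtain ⟨g, hg⟩ := hFsub w
  refine ⟨g - μ • r' w, fun z => ?_⟩
  have := hFrel w z g hg
  rw [breg] at this
  rw [inner_sub_left, real_inner_smul_left]
  linarith

theorem prox_three_point [CompleteSpace E] {F r : E → ℝ} {r' : E → E} {μ a : ℝ} {c u p : E}
    (hr : HasGradientAt r (r' p) p)
    (hFsub : ∀ x, ∃ g : E, ∀ z, F x + ⟪g, z - x⟫ ≤ F z)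
    (hFrel : ∀ x x' g : E, (∀ z, F x + ⟪g, z - x⟫ ≤ F z) →
      F x + ⟪g, x' - x⟫ + μ * breg r r' x x' ≤ F x')
    (hp : ∀ z, ⟪c, p⟫ + a * breg r r' u p + F p ≤ ⟪c, z⟫ + a * breg r r' u z + F z) (z : E) :
    ⟪c, p⟫ + a * breg r r' u p + F p + (a + μ) * breg r r' p z
      ≤ ⟪c, z⟫ + a * breg r r' u z + F z := by
  have haffine : ConvexOn ℝ univ fun z => ⟪c - a • r' u, z⟫ + a * (⟪r' u, u⟫ - r u) :=
    ((innerₛₗ ℝ (c - a • r' u)).convexOn convex_univ).add_const _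
  have hconv : ConvexOn ℝ univ fun z => ⟪c, z⟫ + a * breg r r' u z + F z - (a + μ) * r z := by
    refine ((convexOn_sub_mul_of_relStrongConvex hFsub hFrel).add haffine).congr fun z _ => ?_
    simp only [Pi.add_apply, breg, inner_sub_left, inner_sub_right, real_inner_smul_left]
    ring
  exact add_mul_breg_le_of_forall_le hr hconv hp z

end Bregman

theorem abs_inner_apply_le {E₁ E₂ : Type*} [NormedAddCommGroup E₁] [InnerProductSpace ℝ E₁]
    [NormedAddCommGroup E₂] [InnerProductSpace ℝ E₂] (A : E₁ →L[ℝ] E₂) (u : E₁) (v : E₂)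
    {η : ℝ} (hη : 0 < η) : |⟪v, A u⟫| ≤ ‖u‖ ^ 2 / (2 * η) + η * ‖A‖ ^ 2 * ‖v‖ ^ 2 / 2 := by
  have hsq : ‖u‖ ^ 2 / (2 * η) + η * ‖A‖ ^ 2 * ‖v‖ ^ 2 / 2 - ‖v‖ * (‖A‖ * ‖u‖)
      = (‖u‖ - η * ‖A‖ * ‖v‖) ^ 2 / (2 * η) := by
    field_simp
    ring
  calc |⟪v, A u⟫| ≤ ‖v‖ * ‖A u‖ := abs_real_inner_le_norm _ _
    _ ≤ ‖v‖ * (‖A‖ * ‖u‖) := by gcongr; exact A.le_opNorm u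
    _ ≤ _ := by
      have : 0 ≤ (‖u‖ - η * ‖A‖ * ‖v‖) ^ 2 / (2 * η) := by positivity
      linarith

theorem div_add_one_pow_le_exp {κ : ℝ} (hκ : 0 ≤ κ) (K : ℕ) :
    (κ / (κ + 1)) ^ K ≤ Real.exp (-(K : ℝ) / (1 + κ)) := by
  have hbase : κ / (κ + 1) ≤ Real.exp (-(1 / (1 + κ))) := by
    have : κ / (κ + 1) = -(1 / (1 + κ)) + 1 := by field_simp; ring
    rw [this]
    exact Real.add_one_le_exp _
  calc (κ / (κ + 1)) ^ K ≤ Real.exp (-(1 / (1 + κ))) ^ K := by gcongr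
    _ = Real.exp (-(K : ℝ) / (1 + κ)) := by rw [← Real.exp_nat_mul]; ring_nf

theorem PrimalDual.stepSize_relations {μx μy a ηx ηy κ θ : ℝ} (hμx : 0 < μx) (hμy : 0 < μy)
    (ha : 0 < a)
    (hηx : ηx = √(μy / μx) / (2 * a)) (hηy : ηy = √(μx / μy) / (2 * a))
    (hκ : κ = 2 * a / √(μx * μy)) (hθ : θ = κ / (κ + 1)) :
    θ * (1 / ηx + μx) = 1 / ηx ∧ θ * (1 / ηy + μy) = 1 / ηy ∧ ηx * ηy * a ^ 2 = 1 / 4 := by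
  have hp := Real.sq_sqrt hμx.le
  have hq := Real.sq_sqrt hμy.le
  have : 0 < √μx := Real.sqrt_pos.2 hμx
  have : 0 < √μy := Real.sqrt_pos.2 hμy
  rw [Real.sqrt_div hμy.le] at hηx
  rw [Real.sqrt_div hμx.le] at hηy
  rw [Real.sqrt_mul hμx.le] at hκ
  subst hηx hηy hκ hθ
  refine ⟨?_, ?_, by field_simp; norm_num⟩
  · field_simp
    linear_combination (-√μy) * hp
  · field_simp
    linear_combination (-√μx) * hq

namespace PrimalDual

variable {E₁ E₂ : Type*} [NormedAddCommGroup E₁] [InnerProductSpace ℝ E₁]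
  [NormedAddCommGroup E₂] [InnerProductSpace ℝ E₂]

noncomputable def lyapunov (r : E₁ → ℝ) (r' : E₁ → E₁) (s : E₂ → ℝ) (s' : E₂ → E₂)
    (A : E₁ →L[ℝ] E₂) (xstar : E₁) (ystar : E₂) (ηx ηy θ : ℝ) (x : ℕ → E₁) (y : ℕ → E₂)
    (k : ℕ) : ℝ :=
  breg r r' (x k) xstar / ηx + breg s s' (y k) ystar / ηy
    - θ * ⟪y k - y (k - 1), A (x k - xstar)⟫ + θ / (2 * ηy) * ‖y k - y (k - 1)‖ ^ 2

variable {r : E₁ → ℝ} {r' : E₁ → E₁} {s : E₂ → ℝ} {s' : E₂ → E₂} {F : E₁ → ℝ} {H : E₂ → ℝ}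
  {A : E₁ →L[ℝ] E₂} {xstar : E₁} {ystar : E₂} {μx μy ηx ηy θ : ℝ} {x : ℕ → E₁} {y : ℕ → E₂}

theorem lyapunov_zero :
    lyapunov r r' s s' A xstar ystar ηx ηy θ x y 0
      = breg r r' (x 0) xstar / ηx + breg s s' (y 0) ystar / ηy := by
  simp [lyapunov]

theorem norm_sq_le_two_mul_lyapunov [CompleteSpace E₁] [CompleteSpace E₂]
    (hr : ∀ x, HasGradientAt r (r' x) x) (hrsc : ConvexOn ℝ univ fun x => r x - 1 / 2 * ‖x‖ ^ 2)
    (hs : ∀ y, HasGradientAt s (s' y) y) (hssc : ConvexOn ℝ univ fun y => s y - 1 / 2 * ‖y‖ ^ 2)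
    (hηx : 0 < ηx) (hηy : 0 < ηy) (hθ₀ : 0 ≤ θ) (hθ₁ : θ ≤ 1) (hA : ηx * ηy * ‖A‖ ^ 2 ≤ 1 / 4)
    (k : ℕ) :
    ‖xstar - x k‖ ^ 2 / (2 * ηx) + ‖ystar - y k‖ ^ 2 / ηy
      ≤ 2 * lyapunov r r' s s' A xstar ystar ηx ηy θ x y k := by
  have hDx : 1 / 2 * ‖xstar - x k‖ ^ 2 / ηx ≤ breg r r' (x k) xstar / ηx := by
    gcongr; exact half_norm_sub_sq_le_breg (hr (x k)) hrsc xstar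
  have hDy : 1 / 2 * ‖ystar - y k‖ ^ 2 / ηy ≤ breg s s' (y k) ystar / ηy := by
    gcongr; exact half_norm_sub_sq_le_breg (hs (y k)) hssc ystar
  have hcross := abs_inner_apply_le A (x k - xstar) (y k - y (k - 1)) (by positivity : 0 < 4 * ηx)
  rw [norm_sub_rev (x k)] at hcross
  have hcoef : 4 * ηx * ‖A‖ ^ 2 / 2 ≤ 1 / (2 * ηy) := by
    rw [le_div_iff₀ (by positivity)]; linarith
  have hQ : θ * ⟪y k - y (k - 1), A (x k - xstar)⟫
      ≤ ‖xstar - x k‖ ^ 2 / (8 * ηx) + θ / (2 * ηy) * ‖y k - y (k - 1)‖ ^ 2 := by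
    have := (le_abs_self _).trans hcross
    have hu : θ * (‖xstar - x k‖ ^ 2 / (2 * (4 * ηx))) ≤ ‖xstar - x k‖ ^ 2 / (2 * (4 * ηx)) :=
      mul_le_of_le_one_left (by positivity) hθ₁
    linear_combination θ * this + hu + (θ * ‖y k - y (k - 1)‖ ^ 2) * hcoef
  have hslack : 0 ≤ ‖xstar - x k‖ ^ 2 / (4 * ηx) := by positivity
  rw [lyapunov]
  linear_combination 2 * hDx + 2 * hDy + 2 * hQ + hslack

theorem lyapunov_succ_le [CompleteSpace E₁] [CompleteSpace E₂]
    (hr : ∀ x, HasGradientAt r (r' x) x) (hrsc : ConvexOn ℝ univ fun x => r x - 1 / 2 * ‖x‖ ^ 2)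
    (hs : ∀ y, HasGradientAt s (s' y) y) (hssc : ConvexOn ℝ univ fun y => s y - 1 / 2 * ‖y‖ ^ 2)
    (hFsub : ∀ x, ∃ g : E₁, ∀ z, F x + ⟪g, z - x⟫ ≤ F z)
    (hHsub : ∀ y, ∃ g : E₂, ∀ z, H y + ⟪g, z - y⟫ ≤ H z)
    (hFrel : ∀ x x' g : E₁, (∀ z, F x + ⟪g, z - x⟫ ≤ F z) →
      F x + ⟪g, x' - x⟫ + μx * breg r r' x x' ≤ F x')
    (hHrel : ∀ y y' g : E₂, (∀ z, H y + ⟪g, z - y⟫ ≤ H z) →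
      H y + ⟪g, y' - y⟫ + μy * breg s s' y y' ≤ H y')
    (hgap : ∀ x y, F xstar + ⟪y, A xstar⟫ - H y ≤ F x + ⟪ystar, A x⟫ - H ystar)
    (hηx : 0 < ηx) (hηy : 0 < ηy) (hθ₀ : 0 ≤ θ) (hθ₁ : θ ≤ 1)
    (hbalx : θ * (1 / ηx + μx) = 1 / ηx) (hbaly : θ * (1 / ηy + μy) = 1 / ηy)
    (hA : ηx * ηy * ‖A‖ ^ 2 ≤ 1 / 4) (k : ℕ)
    (hxmin : ∀ z, ⟪A.adjoint (y k + θ • (y k - y (k - 1))), x (k + 1)⟫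
          + 1 / ηx * breg r r' (x k) (x (k + 1)) + F (x (k + 1))
        ≤ ⟪A.adjoint (y k + θ • (y k - y (k - 1))), z⟫ + 1 / ηx * breg r r' (x k) z + F z)
    (hymin : ∀ w, -⟪A (x (k + 1)), y (k + 1)⟫
          + 1 / ηy * breg s s' (y k) (y (k + 1)) + H (y (k + 1))
        ≤ -⟪A (x (k + 1)), w⟫ + 1 / ηy * breg s s' (y k) w + H w) :
    lyapunov r r' s s' A xstar ystar ηx ηy θ x y (k + 1)
      ≤ θ * lyapunov r r' s s' A xstar ystar ηx ηy θ x y k := by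
  have hxprox := prox_three_point (hr _) hFsub hFrel hxmin xstar
  have hyprox := prox_three_point (c := -A (x (k + 1))) (hs _) hHsub hHrel
    (by simpa only [inner_neg_left] using hymin) ystar
  rw [A.adjoint_inner_left, A.adjoint_inner_left] at hxprox
  rw [inner_neg_left, inner_neg_left, real_inner_comm (y (k + 1)), real_inner_comm ystar] at hyprox
  have hcross : ⟪y k + θ • (y k - y (k - 1)), A (x (k + 1))⟫
      - ⟪y k + θ • (y k - y (k - 1)), A xstar⟫ - ⟪y (k + 1), A (x (k + 1))⟫ + ⟪y (k + 1), A xstar⟫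
      = -⟪y (k + 1) - y k, A (x (k + 1) - xstar)⟫ + θ * ⟪y k - y (k - 1), A (x k - xstar)⟫
        + θ * ⟪y k - y (k - 1), A (x (k + 1) - x k)⟫ := by
    simp only [map_sub, inner_sub_left, inner_sub_right, inner_add_left, real_inner_smul_left]
    ring
  have hmaster : (1 / ηx + μx) * breg r r' (x (k + 1)) xstar
      + (1 / ηy + μy) * breg s s' (y (k + 1)) ystar
      + 1 / ηx * breg r r' (x k) (x (k + 1)) + 1 / ηy * breg s s' (y k) (y (k + 1))
      - ⟪y (k + 1) - y k, A (x (k + 1) - xstar)⟫ + θ * ⟪y k - y (k - 1), A (x k - xstar)⟫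
      + θ * ⟪y k - y (k - 1), A (x (k + 1) - x k)⟫
      ≤ breg r r' (x k) xstar / ηx + breg s s' (y k) ystar / ηy := by
    linear_combination hxprox + hyprox + hgap (x (k + 1)) (y (k + 1)) - hcross
  have hBx := half_norm_sub_sq_le_breg (hr (x k)) hrsc (x (k + 1))
  have hBy := half_norm_sub_sq_le_breg (hs (y k)) hssc (y (k + 1))
  have hyoung := (neg_le_abs _).trans (abs_inner_apply_le A (x (k + 1) - x k)
    (θ • (y k - y (k - 1))) hηx)
  rw [real_inner_smul_left, norm_smul, Real.norm_of_nonneg hθ₀] at hyoung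
  have hcoef : θ * ηx * ‖A‖ ^ 2 / 2 ≤ 1 / (2 * ηy) := by
    rw [le_div_iff₀ (by positivity)]
    linarith [mul_le_of_le_one_left (by positivity : 0 ≤ ηx * ηy * ‖A‖ ^ 2) hθ₁]
  rw [lyapunov, lyapunov, Nat.add_sub_cancel]
  linear_combination θ * hmaster + (θ / ηx) * hBx + (θ / ηy) * hBy + θ * hyoung
    + (θ ^ 2 * ‖y k - y (k - 1)‖ ^ 2) * hcoef - breg r r' (x (k + 1)) xstar * hbalx
    - breg s s' (y (k + 1)) ystar * hbaly

end PrimalDual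

theorem stmt2_general {E₁ E₂ : Type*}
    [NormedAddCommGroup E₁] [InnerProductSpace ℝ E₁] [CompleteSpace E₁]
    [NormedAddCommGroup E₂] [InnerProductSpace ℝ E₂] [CompleteSpace E₂]
    (r : E₁ → ℝ) (r' : E₁ → E₁) (s : E₂ → ℝ) (s' : E₂ → E₂)
    (hrgrad : ∀ x, HasGradientAt r (r' x) x)
    (hsgrad : ∀ y, HasGradientAt s (s' y) y)
    (hrsc : ConvexOn ℝ Set.univ (fun x => r x - 1 / 2 * ‖x‖ ^ 2))
    (hssc : ConvexOn ℝ Set.univ (fun y => s y - 1 / 2 * ‖y‖ ^ 2))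
    (F : E₁ → ℝ) (H : E₂ → ℝ) (μx μy : ℝ) (hμx : 0 < μx) (hμy : 0 < μy)
    (hFsub : ∀ x : E₁, ∃ g : E₁, ∀ z, F x + (inner ℝ g (z - x) : ℝ) ≤ F z)
    (hHsub : ∀ y : E₂, ∃ g : E₂, ∀ z, H y + (inner ℝ g (z - y) : ℝ) ≤ H z)
    (hFrel : ∀ x x' : E₁, ∀ g : E₁, (∀ z, F x + (inner ℝ g (z - x) : ℝ) ≤ F z) →
      F x + (inner ℝ g (x' - x) : ℝ) + μx * breg r r' x x' ≤ F x')
    (hHrel : ∀ y y' : E₂, ∀ g : E₂, (∀ z, H y + (inner ℝ g (z - y) : ℝ) ≤ H z) →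
      H y + (inner ℝ g (y' - y) : ℝ) + μy * breg s s' y y' ≤ H y')
    (A : E₁ →L[ℝ] E₂) (hA : 0 < ‖A‖) (xstar : E₁) (ystar : E₂)
    (hsaddle : ∀ (x : E₁) (y : E₂),
      F xstar + (inner ℝ y (A xstar) : ℝ) - H y
          ≤ F xstar + (inner ℝ ystar (A xstar) : ℝ) - H ystar ∧
      F xstar + (inner ℝ ystar (A xstar) : ℝ) - H ystar
          ≤ F x + (inner ℝ ystar (A x) : ℝ) - H ystar)
    -- parameter choices
    (ηx ηy κ θ : ℝ)
    (hηx : ηx = Real.sqrt (μy / μx) / (2 * ‖A‖))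
    (hηy : ηy = Real.sqrt (μx / μy) / (2 * ‖A‖))
    (hκ : κ = 2 * ‖A‖ / Real.sqrt (μx * μy))
    (hθ : θ = κ / (κ + 1))
    -- primal–dual iterates (y₋₁ = y₀ is encoded by truncated subtraction at k = 0)
    (x : ℕ → E₁) (y : ℕ → E₂)
    (hxmin : ∀ k : ℕ, ∀ z : E₁,
      (inner ℝ ((ContinuousLinearMap.adjoint A) (y k + θ • (y k - y (k - 1)))) (x (k + 1)) : ℝ)
          + 1 / ηx * breg r r' (x k) (x (k + 1)) + F (x (k + 1))
        ≤ (inner ℝ ((ContinuousLinearMap.adjoint A) (y k + θ • (y k - y (k - 1)))) z : ℝ)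
          + 1 / ηx * breg r r' (x k) z + F z)
    (hymin : ∀ k : ℕ, ∀ w : E₂,
      -(inner ℝ (A (x (k + 1))) (y (k + 1)) : ℝ)
          + 1 / ηy * breg s s' (y k) (y (k + 1)) + H (y (k + 1))
        ≤ -(inner ℝ (A (x (k + 1))) w : ℝ)
          + 1 / ηy * breg s s' (y k) w + H w) :
    ∀ K : ℕ,
      ‖xstar - x K‖ ^ 2 / (2 * ηx) + ‖ystar - y K‖ ^ 2 / ηy
        ≤ 2 * Real.exp (-(K : ℝ) / (1 + κ))
          * (breg r r' (x 0) xstar / ηx + breg s s' (y 0) ystar / ηy) := by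
  obtain ⟨hbalx, hbaly, hprod⟩ := PrimalDual.stepSize_relations hμx hμy hA hηx hηy hκ hθ
  have hηx₀ : 0 < ηx := by rw [hηx]; positivity
  have hηy₀ : 0 < ηy := by rw [hηy]; positivity
  have hκ₀ : 0 ≤ κ := by rw [hκ]; positivity
  have hθ₀ : 0 ≤ θ := by rw [hθ]; positivity
  have hθ₁ : θ ≤ 1 := by rw [hθ]; exact div_le_one_of_le₀ (by linarith) (by linarith)
  set Φ := PrimalDual.lyapunov r r' s s' A xstar ystar ηx ηy θ x y
  have hdecay (K : ℕ) : Φ K ≤ θ ^ K * Φ 0 := le_geom hθ₀ K fun k _ =>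
    PrimalDual.lyapunov_succ_le hrgrad hrsc hsgrad hssc hFsub hHsub hFrel hHrel
      (fun x y => (hsaddle x y).1.trans (hsaddle x y).2) hηx₀ hηy₀ hθ₀ hθ₁ hbalx hbaly hprod.le k
      (hxmin k) (hymin k)
  have hbound (K : ℕ) : ‖xstar - x K‖ ^ 2 / (2 * ηx) + ‖ystar - y K‖ ^ 2 / ηy ≤ 2 * Φ K :=
    PrimalDual.norm_sq_le_two_mul_lyapunov hrgrad hrsc hsgrad hssc hηx₀ hηy₀ hθ₀ hθ₁ hprod.le K
  have hΦ₀ : 0 ≤ Φ 0 := by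
    have : 0 ≤ ‖xstar - x 0‖ ^ 2 / (2 * ηx) + ‖ystar - y 0‖ ^ 2 / ηy := by positivity
    linarith [hbound 0]
  have hΦ₀_eq : Φ 0 = breg r r' (x 0) xstar / ηx + breg s s' (y 0) ystar / ηy :=
    PrimalDual.lyapunov_zero
  intro K
  calc _ ≤ 2 * Φ K := hbound K
    _ ≤ 2 * (Real.exp (-(K : ℝ) / (1 + κ)) * Φ 0) := by
      gcongr
      exact (hdecay K).trans (by gcongr; rw [hθ]; exact div_add_one_pow_le_exp hκ₀ K)
    _ = _ := by rw [hΦ₀_eq]; ring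

/-- linear convergence of the primal–dual method (Chambolle–Pock) for the
bilinearly coupled minimax problem min_x max_y F(x) + ⟨y, Ax⟩ − H(y).
Indexing convention: sequences are over ℕ and `y (k-1)` uses truncated subtraction,
so at k = 0 it equals `y 0`, encoding y₋₁ = y₀. -/
theorem stmt2 {E₁ E₂ : Type*}
    [NormedAddCommGroup E₁] [InnerProductSpace ℝ E₁] [CompleteSpace E₁]
    [NormedAddCommGroup E₂] [InnerProductSpace ℝ E₂] [CompleteSpace E₂]
    (r : E₁ → ℝ) (r' : E₁ → E₁) (s : E₂ → ℝ) (s' : E₂ → E₂)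
    (hrgrad : ∀ x, HasGradientAt r (r' x) x)
    (hsgrad : ∀ y, HasGradientAt s (s' y) y)
    (hrsc : ConvexOn ℝ Set.univ (fun x => r x - 1 / 2 * ‖x‖ ^ 2))
    (hssc : ConvexOn ℝ Set.univ (fun y => s y - 1 / 2 * ‖y‖ ^ 2))
    (F : E₁ → ℝ) (H : E₂ → ℝ) (μx μy : ℝ) (hμx : 0 < μx) (hμy : 0 < μy)
    (hFconv : ConvexOn ℝ Set.univ F) (hHconv : ConvexOn ℝ Set.univ H)
    (hFsub : ∀ x : E₁, ∃ g : E₁, ∀ z, F x + (inner ℝ g (z - x) : ℝ) ≤ F z)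
    (hHsub : ∀ y : E₂, ∃ g : E₂, ∀ z, H y + (inner ℝ g (z - y) : ℝ) ≤ H z)
    (hFrel : ∀ x x' : E₁, ∀ g : E₁, (∀ z, F x + (inner ℝ g (z - x) : ℝ) ≤ F z) →
      F x + (inner ℝ g (x' - x) : ℝ) + μx * breg r r' x x' ≤ F x')
    (hHrel : ∀ y y' : E₂, ∀ g : E₂, (∀ z, H y + (inner ℝ g (z - y) : ℝ) ≤ H z) →
      H y + (inner ℝ g (y' - y) : ℝ) + μy * breg s s' y y' ≤ H y')
    (A : E₁ →L[ℝ] E₂) (hA : 0 < ‖A‖) (xstar : E₁) (ystar : E₂)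
    (hsaddle : ∀ (x : E₁) (y : E₂),
      F xstar + (inner ℝ y (A xstar) : ℝ) - H y
          ≤ F xstar + (inner ℝ ystar (A xstar) : ℝ) - H ystar ∧
      F xstar + (inner ℝ ystar (A xstar) : ℝ) - H ystar
          ≤ F x + (inner ℝ ystar (A x) : ℝ) - H ystar)
    -- parameter choices
    (ηx ηy κ θ : ℝ)
    (hηx : ηx = Real.sqrt (μy / μx) / (2 * ‖A‖))
    (hηy : ηy = Real.sqrt (μx / μy) / (2 * ‖A‖))
    (hκ : κ = 2 * ‖A‖ / Real.sqrt (μx * μy))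
    (hθ : θ = κ / (κ + 1))
    -- primal–dual iterates (y₋₁ = y₀ is encoded by truncated subtraction at k = 0)
    (x : ℕ → E₁) (y : ℕ → E₂)
    (hxmin : ∀ k : ℕ, ∀ z : E₁,
      (inner ℝ ((ContinuousLinearMap.adjoint A) (y k + θ • (y k - y (k - 1)))) (x (k + 1)) : ℝ)
          + 1 / ηx * breg r r' (x k) (x (k + 1)) + F (x (k + 1))
        ≤ (inner ℝ ((ContinuousLinearMap.adjoint A) (y k + θ • (y k - y (k - 1)))) z : ℝ)
          + 1 / ηx * breg r r' (x k) z + F z)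
    (hymin : ∀ k : ℕ, ∀ w : E₂,
      -(inner ℝ (A (x (k + 1))) (y (k + 1)) : ℝ)
          + 1 / ηy * breg s s' (y k) (y (k + 1)) + H (y (k + 1))
        ≤ -(inner ℝ (A (x (k + 1))) w : ℝ)
          + 1 / ηy * breg s s' (y k) w + H w) :
    ∀ K : ℕ,
      ‖xstar - x K‖ ^ 2 / (2 * ηx) + ‖ystar - y K‖ ^ 2 / ηy
        ≤ 2 * Real.exp (-(K : ℝ) / (1 + κ))
          * (breg r r' (x 0) xstar / ηx + breg s s' (y 0) ystar / ηy) :=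
  stmt2_general r r' s s' hrgrad hsgrad hrsc hssc F H μx μy hμx hμy hFsub hHsub hFrel hHrel A hA
    xstar ystar hsaddle ηx ηy κ θ hηx hηy hκ hθ x y hxmin hymin
end

section
/- Let f : E → ℝ be L-smooth and μ-strongly convex with 0 < μ < L, set f̲ := f − (μ/2)‖·‖², and let f̲*(u) := sup_{x ∈ E} (⟨u, x⟩ − f̲(x)) be its convex conjugate. Fix ηx, ηu > 0, θ ≥ 0, and x₀ ∈ E. Define x̲_{−1} = x̲₀ = x₀, u_{−1} = u₀ = ∇f̲(x₀), and suppose that for every k ≥ 0: ũ_{k+1} := u_k + θ (u_k − u_{k−1}); x_{k+1} := (x_k − ηx ũ_{k+1})/(1 + ηx μ); u_{k+1} is a global minimizer of u ↦ −⟨x_{k+1}, u⟩ + f̲*(u) + (1/ηu)(f̲*(u) − f̲*(u_k) − ⟨x̲_k, u − u_k⟩) (with values in ℝ ∪ {+∞}); and x̲_{k+1} := (x̲_k + ηu x_{k+1})/(1 + ηu). Then u_k = ∇f̲(x̲_k) for every k ≥ −1; in particular, the x-iterates satisfy the gradient-based recursion x_{k+1} = (x_k − ηx (∇f̲(x̲_k)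 + θ(∇f̲(x̲_k) − ∇f̲(x̲_{k−1}))))/(1 + ηx μ) for all k ≥ 0. -/
/-!
Write `g := f̲`, which is convex and differentiable. By the Fenchel–Young equality, the conjugate is
finite at every gradient, `g*(∇g z) = ⟪∇g z, z⟫ - g z`. If `u_k = ∇g(x̲_k)`, the Bregman term is
therefore finite and the dual objective equals `(1 + ηu)/ηu · (g*(u) - ⟪x̲_{k+1}, u⟫)` up to an
additive constant. Comparing the minimizer `u_{k+1}` with the competitor `∇g(x̲_{k+1})` gives
`g*(u_{k+1}) ≤ ⟪u_{k+1}, x̲_{k+1}⟫ - g(x̲_{k+1})`, so `x̲_{k+1}` maximizes `⟪u_{k+1}, ·⟫ - g` and the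
first-order condition yields `u_{k+1} = ∇g(x̲_{k+1})`. Induction on `k` finishes the proof.
-/

/-- The convex conjugate g*(u) := sup_{x} (⟨u, x⟩ − g(x)), with values in ℝ ∪ {±∞}. -/
noncomputable def conj {E : Type*} [NormedAddCommGroup E] [InnerProductSpace ℝ E]
    (g : E → ℝ) (u : E) : EReal :=
  ⨆ x : E, (((inner ℝ u x : ℝ) - g x : ℝ) : EReal)

section

open InnerProductSpace Set

variable {E : Type*} [NormedAddCommGroup E] [InnerProductSpace ℝ E]

theorem inner_sub_le_conj (g : E → ℝ) (u y : E) :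
    ((inner ℝ u y - g y : ℝ) : EReal) ≤ conj g u :=
  le_iSup (fun x : E => ((inner ℝ u x - g x : ℝ) : EReal)) y

theorem conj_ne_bot (g : E → ℝ) (u : E) : conj g u ≠ ⊥ :=
  ne_bot_of_le_ne_bot (EReal.coe_ne_bot _) (inner_sub_le_conj g u 0)

section Gradient

variable [CompleteSpace E] {g : E → ℝ} {z gz u : E}

theorem ConvexOn.inner_gradient_le_sub (hg : ConvexOn ℝ univ g) (hgz : HasGradientAt g gz z)
    (y : E) : inner ℝ gz (y - z) ≤ g y - g z := by
  let ℓ : ℝ →ᵃ[ℝ] E := AffineMap.lineMap z y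
  have hgℓ : HasFDerivAt g (toDual ℝ E gz) (ℓ 0) := by
    simpa [ℓ] using hgz.hasFDerivAt
  have hline : HasDerivAt (g ∘ ℓ) (inner ℝ gz (y - z)) 0 := by
    simpa using hgℓ.comp_hasDerivAt (0 : ℝ) AffineMap.hasDerivAt_lineMap
  simpa [slope_def_field, ℓ] using
    (hg.comp_affineMap ℓ).le_slope_of_hasDerivAt (mem_univ 0) (mem_univ 1) zero_lt_one hline

theorem ConvexOn.conj_eq_of_hasGradientAt (hg : ConvexOn ℝ univ g) (hgz : HasGradientAt g gz z) :
    conj g gz = ((inner ℝ gz z - g z : ℝ) : EReal) := by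
  refine le_antisymm (iSup_le fun y => EReal.coe_le_coe_iff.mpr ?_) (inner_sub_le_conj g gz z)
  have := hg.inner_gradient_le_sub hgz y
  rw [inner_sub_right] at this
  linarith

theorem eq_of_hasGradientAt_of_conj_le (hgz : HasGradientAt g gz z)
    (hu : conj g u ≤ ((inner ℝ u z - g z : ℝ) : EReal)) : u = gz := by
  have hmax : IsMaxOn (fun y => inner ℝ u y - g y) univ z := fun y _ =>
    EReal.coe_le_coe_iff.mp ((inner_sub_le_conj g u y).trans hu)
  have hderiv : HasFDerivAt (fun y => inner ℝ u y - g y) (toDual ℝ E u - toDual ℝ E gz) z :=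
    (toDual ℝ E u).hasFDerivAt.sub hgz.hasFDerivAt
  have := (hmax.isLocalMax Filter.univ_mem).hasFDerivAt_eq_zero hderiv
  rwa [sub_eq_zero, (toDual ℝ E).injective.eq_iff] at this

end Gradient

/-- The dual proximal objective `w ↦ -⟪x, w⟫ + g*(w) + D(w, uk) / η`, where `D` is the Bregman
divergence of `g*` taken with `xk` in the role of a subgradient of `g*` at `uk`. -/
noncomputable def dualProxObjective (g : E → ℝ) (η : ℝ) (x xk uk w : E) : EReal :=
  ((-inner ℝ x w : ℝ) : EReal) + conj g w
    + ((1 / η : ℝ) : EReal) * (conj g w - conj g uk - ((inner ℝ xk (w - uk) : ℝ) : EReal))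

section DualProx

variable {g : E → ℝ} {η : ℝ} {x xk uk w : E} {c : ℝ}

theorem dualProxObjective_eq_coe {r : ℝ} (hw : conj g w = r) (hc : conj g uk = c) :
    dualProxObjective g η x xk uk w
      = ((-inner ℝ x w + r + 1 / η * (r - c - inner ℝ xk (w - uk)) : ℝ) : EReal) := by
  rw [dualProxObjective, hw, hc]
  norm_cast

theorem dualProxObjective_eq_top (hη : 0 < η) (hw : conj g w = ⊤) (hc : conj g uk = c) :
    dualProxObjective g η x xk uk w = ⊤ := by
  rw [dualProxObjective, hw, hc, EReal.top_sub_coe, EReal.top_sub_coe,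
    EReal.coe_mul_top_of_pos (by positivity), EReal.coe_add_top, EReal.top_add_top]

end DualProx

theorem eq_gradient_of_isMinOn_dualProxObjective [CompleteSpace E] {g : E → ℝ} {g' : E → E}
    (hg : ConvexOn ℝ univ g) (hgrad : ∀ x, HasGradientAt g (g' x) x) {η : ℝ} (hη : 0 < η)
    {x xk u : E}
    (hmin : IsMinOn (dualProxObjective g η x xk (g' xk)) univ u) :
    u = g' ((1 + η)⁻¹ • (xk + η • x)) := by
  rw [isMinOn_univ_iff] at hmin
  set xb := (1 + η)⁻¹ • (xk + η • x)
  have hck := hg.conj_eq_of_hasGradientAt (hgrad xk)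
  have hcv := hg.conj_eq_of_hasGradientAt (hgrad xb)
  have hne_top : conj g u ≠ ⊤ := fun htop => by
    have := hmin (g' xb)
    rw [dualProxObjective_eq_top hη htop hck, dualProxObjective_eq_coe hcv hck, top_le_iff] at this
    exact EReal.coe_ne_top _ this
  set r := (conj g u).toReal
  have hr : conj g u = r := (EReal.coe_toReal hne_top (conj_ne_bot g u)).symm
  have hreal := hmin (g' xb)
  rw [dualProxObjective_eq_coe hr hck, dualProxObjective_eq_coe hcv hck,
    EReal.coe_le_coe_iff] at hreal
  have hxb : xk + η • x = (1 + η) • xb := by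
    rw [smul_smul, mul_inv_cancel₀ (by positivity), one_smul]
  have hinner : ∀ w, inner ℝ xk w + η * inner ℝ x w = (1 + η) * inner ℝ xb w := fun w => by
    rw [← real_inner_smul_left, ← inner_add_left, hxb, real_inner_smul_left]
  have hkey : (1 + η) * (r - inner ℝ u xb) ≤ (1 + η) * -g xb := by
    have h1 := hinner u
    have h2 := hinner (g' xb)
    rw [inner_sub_right, inner_sub_right] at hreal
    rw [real_inner_comm u xb] at h1
    rw [real_inner_comm (g' xb) xb] at h2
    field_simp at hreal
    linarith
  have hfy : r ≤ inner ℝ u xb - g xb := by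
    linarith [le_of_mul_le_mul_left hkey (by positivity)]
  exact eq_of_hasGradientAt_of_conj_le (hgrad xb) (hr ▸ EReal.coe_le_coe_iff.mpr hfy)

end

/-- Sequences are indexed by `ℕ`; at `k = 0` the truncated subtraction `k - 1 = 0` encodes
`x̲₋₁ = x̲₀` and `u₋₁ = u₀`. -/
theorem stmt5_general {E : Type*} [NormedAddCommGroup E] [InnerProductSpace ℝ E] [CompleteSpace E]
    (μ : ℝ)
    (f : E → ℝ)
    (hsc : ConvexOn ℝ Set.univ (fun x => f x - μ / 2 * ‖x‖ ^ 2))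
    -- f̲ := f − (μ/2)‖·‖² and its gradient
    (lf : E → ℝ) (hlf : lf = fun x => f x - μ / 2 * ‖x‖ ^ 2)
    (lf' : E → E)
    (hlfgrad : ∀ x, HasGradientAt lf (lf' x) x)
    (ηx ηu θ : ℝ) (hηu : 0 < ηu)
    (x₀ : E) (x u xl : ℕ → E)
    (hxl0 : xl 0 = x₀) (hu0 : u 0 = lf' x₀)
    -- the primal–dual update rule
    (hxupd : ∀ k : ℕ,
      x (k + 1) = (1 + ηx * μ)⁻¹ •
        (x k - ηx • (u k + θ • (u k - u (k - 1)))))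
    (humin : ∀ k : ℕ, ∀ w : E,
      ((-(inner ℝ (x (k + 1)) (u (k + 1))) : ℝ) : EReal) + conj lf (u (k + 1))
          + (((1 / ηu : ℝ)) : EReal) * (conj lf (u (k + 1)) - conj lf (u k)
              - (((inner ℝ (xl k) (u (k + 1) - u k) : ℝ)) : EReal))
        ≤ ((-(inner ℝ (x (k + 1)) w) : ℝ) : EReal) + conj lf w
          + (((1 / ηu : ℝ)) : EReal) * (conj lf w - conj lf (u k)
              - (((inner ℝ (xl k) (w - u k) : ℝ)) : EReal)))
    (hxlupd : ∀ k : ℕ, xl (k + 1) = (1 + ηu)⁻¹ • (xl k + ηu • x (k + 1))) :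
    (∀ k : ℕ, u k = lf' (xl k)) ∧
    (∀ k : ℕ, x (k + 1) = (1 + ηx * μ)⁻¹ •
      (x k - ηx • (lf' (xl k) + θ • (lf' (xl k) - lf' (xl (k - 1)))))) := by
  have hcvx : ConvexOn ℝ Set.univ lf := hlf ▸ hsc
  have hu : ∀ k, u k = lf' (xl k) := by
    intro k
    induction k with
    | zero => rw [hu0, hxl0]
    | succ k ih =>
      rw [hxlupd k]
      exact eq_gradient_of_isMinOn_dualProxObjective hcvx hlfgrad hηu
        (isMinOn_univ_iff.mpr (ih ▸ humin k))
  exact ⟨hu, fun k => by rw [hxupd k, hu k, hu (k - 1)]⟩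

/-- equivalence of the primal–dual update (with Bregman proximal step on
the conjugate f̲*) and the gradient-based AGD-like recursion. Sequences are over ℕ;
indices k−1 use truncated subtraction at k = 0, encoding x̲₋₁ = x̲₀ and u₋₁ = u₀. -/
theorem stmt5 {E : Type*} [NormedAddCommGroup E] [InnerProductSpace ℝ E] [CompleteSpace E]
    (L μ : ℝ) (hμ : 0 < μ) (hμL : μ < L)
    (f : E → ℝ) (f' : E → E)
    (hgrad : ∀ x, HasGradientAt f (f' x) x)
    (hlip : ∀ x y, ‖f' x - f' y‖ ≤ L * ‖x - y‖)
    (hsc : ConvexOn ℝ Set.univ (fun x => f x - μ / 2 * ‖x‖ ^ 2))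
    -- f̲ := f − (μ/2)‖·‖² and its gradient
    (lf : E → ℝ) (hlf : lf = fun x => f x - μ / 2 * ‖x‖ ^ 2)
    (lf' : E → E) (hlf' : lf' = fun x => f' x - μ • x)
    (hlfgrad : ∀ x, HasGradientAt lf (lf' x) x)
    (ηx ηu θ : ℝ) (hηx : 0 < ηx) (hηu : 0 < ηu) (hθ : 0 ≤ θ)
    (x₀ : E) (x u xl : ℕ → E)
    (hx0 : x 0 = x₀) (hxl0 : xl 0 = x₀) (hu0 : u 0 = lf' x₀)
    -- the primal–dual update rule
    (hxupd : ∀ k : ℕ,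
      x (k + 1) = (1 + ηx * μ)⁻¹ •
        (x k - ηx • (u k + θ • (u k - u (k - 1)))))
    (humin : ∀ k : ℕ, ∀ w : E,
      ((-(inner ℝ (x (k + 1)) (u (k + 1))) : ℝ) : EReal) + conj lf (u (k + 1))
          + (((1 / ηu : ℝ)) : EReal) * (conj lf (u (k + 1)) - conj lf (u k)
              - (((inner ℝ (xl k) (u (k + 1) - u k) : ℝ)) : EReal))
        ≤ ((-(inner ℝ (x (k + 1)) w) : ℝ) : EReal) + conj lf w
          + (((1 / ηu : ℝ)) : EReal) * (conj lf w - conj lf (u k)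
              - (((inner ℝ (xl k) (w - u k) : ℝ)) : EReal)))
    (hxlupd : ∀ k : ℕ, xl (k + 1) = (1 + ηu)⁻¹ • (xl k + ηu • x (k + 1))) :
    (∀ k : ℕ, u k = lf' (xl k)) ∧
    (∀ k : ℕ, x (k + 1) = (1 + ηx * μ)⁻¹ •
      (x k - ηx • (lf' (xl k) + θ • (lf' (xl k) - lf' (xl (k - 1)))))) :=
  stmt5_general μ f hsc lf hlf lf' hlfgrad ηx ηu θ hηu x₀ x u xl hxl0 hu0 hxupd humin hxlupd
end

section
/- Let C ⊆ E be a nonempty closed convex set, let r : E → ℝ be convex and differentiable, let F : E → ℝ be convex and differentiable, and let μ ≥ 0 be such that F(x') ≥ F(x) + ⟨∇F(x), x' − x⟩ + μ V^r_x(x') for all x, x' ∈ C (relative μ-strong convexity of F with respect to V^r on C). Let g ∈ E, η > 0, x_k ∈ C, and suppose x₊ is a minimizer over C of x ↦ ⟨g, x⟩ + F(x) + (1/η) V^r_{x_k}(x). Then for every x ∈ C: ⟨g, x₊ − x⟩ + F(x₊) − F(x) ≤ (1/η) V^r_{x_k}(x) − (1/η + μ) V^r_{x₊}(x) − (1/η)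 V^r_{x_k}(x₊). -/
/-!
The first-order optimality condition for `xp` gives
`0 ≤ ⟪g + ∇F(xp) + (∇r(xp) - ∇r(xk)) / η, x - xp⟫`; the three-point identity rewrites the
`r`-part as `(V_xk(x) - V_xp(x) - V_xk(xp)) / η`, and relative strong convexity of `F` at `xp`
bounds the `F`-part.
-/

open InnerProductSpace

theorem IsMinOn.hasFDerivAt_apply_sub_nonneg {E : Type*} [NormedAddCommGroup E]
    [NormedSpace ℝ E] {f : E → ℝ} {f' : E →L[ℝ] ℝ} {s : Set E} {a x : E}
    (hmin : IsMinOn f s a) (hf : HasFDerivAt f f' a) (hs : Convex ℝ s) (ha : a ∈ s)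
    (hx : x ∈ s) : 0 ≤ f' (x - a) :=
  hmin.localize.hasFDerivWithinAt_nonneg hf.hasFDerivWithinAt
    (sub_mem_posTangentConeAt_of_segment_subset (hs.segment_subset ha hx))

section Bregman

variable {E : Type*} [NormedAddCommGroup E] [InnerProductSpace ℝ E] (r : E → ℝ) (r' : E → E)

theorem breg_sub_breg_sub_breg (a b c : E) :
    breg r r' a c - breg r r' b c - breg r r' a b = inner ℝ (r' b - r' a) (c - b) := by
  have hc : c - a = (c - b) + (b - a) := by abel
  simp only [breg, hc, inner_add_right, inner_sub_left]
  ring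

theorem hasFDerivAt_breg [CompleteSpace E] (a : E) {x : E} (hr : HasGradientAt r (r' x) x) :
    HasFDerivAt (breg r r' a) (toDual ℝ E (r' x - r' a)) x := by
  have h := (hr.hasFDerivAt.sub_const (r a)).sub
    (((innerSL ℝ (r' a)).hasFDerivAt).comp x ((hasFDerivAt_id x).sub_const a))
  convert h using 1 <;> ext <;> simp [breg]

end Bregman

theorem stmt16_general {E : Type*} [NormedAddCommGroup E] [InnerProductSpace ℝ E] [CompleteSpace E]
    (C : Set E) (hCcv : Convex ℝ C)
    (r : E → ℝ) (r' : E → E) (hrgrad : ∀ x, HasGradientAt r (r' x) x)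
    (F : E → ℝ) (F' : E → E) (hFgrad : ∀ x, HasGradientAt F (F' x) x)
    (μ : ℝ)
    (hrel : ∀ x ∈ C, ∀ x' ∈ C,
      F x + (inner ℝ (F' x) (x' - x) : ℝ) + μ * breg r r' x x' ≤ F x')
    (g : E) (η : ℝ) (xk : E)
    (xp : E) (hxpC : xp ∈ C)
    (hmin : ∀ x ∈ C,
      (inner ℝ g xp : ℝ) + F xp + 1 / η * breg r r' xk xp
        ≤ (inner ℝ g x : ℝ) + F x + 1 / η * breg r r' xk x) :
    ∀ x ∈ C, (inner ℝ g (xp - x) : ℝ) + F xp - F x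
      ≤ 1 / η * breg r r' xk x - (1 / η + μ) * breg r r' xp x
        - 1 / η * breg r r' xk xp := by
  intro x hx
  have hobj := ((innerSL ℝ g).hasFDerivAt.add (hFgrad xp).hasFDerivAt).add
    ((hasFDerivAt_breg r r' xk (hrgrad xp)).const_mul (1 / η))
  have hopt : 0 ≤ inner ℝ g (x - xp) + inner ℝ (F' xp) (x - xp)
      + 1 / η * inner ℝ (r' xp - r' xk) (x - xp) := by
    simpa [inner_sub_left] using
      (isMinOn_iff.2 hmin).hasFDerivAt_apply_sub_nonneg hobj hCcv hxpC hx
  have hthree := breg_sub_breg_sub_breg r r' xk xp x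
  have hFx := hrel xp hxpC x hx
  have hg : inner ℝ g (xp - x) = -inner ℝ g (x - xp) := by rw [← inner_neg_right, neg_sub]
  linear_combination hopt + hFx - (1 / η) * hthree + hg

/-- the mirror-descent lemma. -/
theorem stmt16 {E : Type*} [NormedAddCommGroup E] [InnerProductSpace ℝ E] [CompleteSpace E]
    (C : Set E) (hCne : C.Nonempty) (hCcl : IsClosed C) (hCcv : Convex ℝ C)
    (r : E → ℝ) (r' : E → E) (hrgrad : ∀ x, HasGradientAt r (r' x) x)
    (hrconv : ConvexOn ℝ Set.univ r)
    (F : E → ℝ) (F' : E → E) (hFgrad : ∀ x, HasGradientAt F (F' x) x)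
    (hFconv : ConvexOn ℝ Set.univ F)
    (μ : ℝ) (hμ : 0 ≤ μ)
    (hrel : ∀ x ∈ C, ∀ x' ∈ C,
      F x + (inner ℝ (F' x) (x' - x) : ℝ) + μ * breg r r' x x' ≤ F x')
    (g : E) (η : ℝ) (hη : 0 < η) (xk : E) (hxk : xk ∈ C)
    (xp : E) (hxpC : xp ∈ C)
    (hmin : ∀ x ∈ C,
      (inner ℝ g xp : ℝ) + F xp + 1 / η * breg r r' xk xp
        ≤ (inner ℝ g x : ℝ) + F x + 1 / η * breg r r' xk x) :
    ∀ x ∈ C, (inner ℝ g (xp - x) : ℝ) + F xp - F x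
      ≤ 1 / η * breg r r' xk x - (1 / η + μ) * breg r r' xp x
        - 1 / η * breg r r' xk xp :=
  stmt16_general C hCcv r r' hrgrad F F' hFgrad μ hrel g η xk xp hxpC hmin
end

section
/- Let Y ⊆ E₂ be a nonempty closed convex set, let h : E₂ → ℝ be μy-strongly convex with μy > 0, and let A : E₁ → E₂ be a bounded linear operator. Let x₁, x₂ ∈ E₁ and suppose y₁ is a maximizer over Y of y ↦ ⟨y, A x₁⟩ − h(y) and y₂ is a maximizer over Y of y ↦ ⟨y, A x₂⟩ − h(y). Then ‖y₁ − y₂‖ ≤ (‖A‖/μy) ‖x₁ − x₂‖. -/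
/-!
Both `yᵢ` minimize the `μy`-strongly convex function `y ↦ h y - ⟪y, A xᵢ⟫` over `Y`, so each one
has quadratic growth `μy/2 ‖y - yᵢ‖²` at the other. Adding the two growth inequalities cancels `h`
and leaves `μy ‖y₁ - y₂‖² ≤ ⟪y₁ - y₂, A (x₁ - x₂)⟫`, and Cauchy–Schwarz finishes.
-/

open Filter Set Topology RealInnerProductSpace

section StrongConvexity

variable {E : Type*} [NormedAddCommGroup E] [NormedSpace ℝ E] {s : Set E} {m : ℝ} {f : E → ℝ}

lemma StrongConvexOn.add_mul_sq_norm_sub_le_of_isMinOn (hf : StrongConvexOn s m f) {y z : E}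
    (hy : y ∈ s) (hz : z ∈ s) (hmin : IsMinOn f s z) :
    f z + m / 2 * ‖y - z‖ ^ 2 ≤ f y := by
  have hsegment : ∀ t ∈ Ioc (0 : ℝ) 1, (1 - t) * (m / 2 * ‖y - z‖ ^ 2) ≤ f y - f z := by
    rintro t ⟨ht0, ht1⟩
    have hconv := hf.2 hy hz ht0.le (sub_nonneg.2 ht1) (add_sub_cancel t 1)
    have hle : f z ≤ f (t • y + (1 - t) • z) :=
      hmin (hf.1 hy hz ht0.le (sub_nonneg.2 ht1) (add_sub_cancel t 1))
    rw [smul_eq_mul, smul_eq_mul] at hconv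
    refine le_of_mul_le_mul_left ?_ ht0
    nlinarith
  have hlim : Tendsto (fun t : ℝ ↦ (1 - t) * (m / 2 * ‖y - z‖ ^ 2)) (𝓝[>] 0)
      (𝓝 (m / 2 * ‖y - z‖ ^ 2)) := by
    have hcont : Continuous fun t : ℝ ↦ (1 - t) * (m / 2 * ‖y - z‖ ^ 2) := by fun_prop
    simpa using (hcont.tendsto 0).mono_left nhdsWithin_le_nhds
  have hev : ∀ᶠ t in 𝓝[>] (0 : ℝ), (1 - t) * (m / 2 * ‖y - z‖ ^ 2) ≤ f y - f z :=
    eventually_of_mem (Ioc_mem_nhdsGT zero_lt_one) hsegment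
  linarith [le_of_tendsto hlim hev]

end StrongConvexity

section InnerProductSpace

variable {E : Type*} [NormedAddCommGroup E] [InnerProductSpace ℝ E] {s : Set E} {m : ℝ}
  {h : E → ℝ}

lemma StrongConvexOn.sub_inner_right (hh : StrongConvexOn s m h) (c : E) :
    StrongConvexOn s m fun y ↦ h y - ⟪y, c⟫ := by
  have hlin : ConcaveOn ℝ s fun y ↦ ⟪y, c⟫ := by
    simpa [real_inner_comm c] using (innerSL ℝ c).toLinearMap.concaveOn hh.1
  have hsub := hh.sub (uniformConcaveOn_zero.2 hlin)
  rwa [add_zero] at hsub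

lemma StrongConvexOn.mul_norm_sub_le_of_isMaxOn (hh : StrongConvexOn s m h) {c₁ c₂ y₁ y₂ : E}
    (hy₁ : y₁ ∈ s) (hy₂ : y₂ ∈ s)
    (hmax₁ : IsMaxOn (fun y ↦ ⟪y, c₁⟫ - h y) s y₁)
    (hmax₂ : IsMaxOn (fun y ↦ ⟪y, c₂⟫ - h y) s y₂) :
    m * ‖y₁ - y₂‖ ≤ ‖c₁ - c₂‖ := by
  have hmin₁ : IsMinOn (fun y ↦ h y - ⟪y, c₁⟫) s y₁ :=
    isMinOn_iff.2 fun y hy ↦ by linarith [isMaxOn_iff.1 hmax₁ y hy]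
  have hmin₂ : IsMinOn (fun y ↦ h y - ⟪y, c₂⟫) s y₂ :=
    isMinOn_iff.2 fun y hy ↦ by linarith [isMaxOn_iff.1 hmax₂ y hy]
  have hgrowth₁ := (hh.sub_inner_right c₁).add_mul_sq_norm_sub_le_of_isMinOn hy₂ hy₁ hmin₁
  have hgrowth₂ := (hh.sub_inner_right c₂).add_mul_sq_norm_sub_le_of_isMinOn hy₁ hy₂ hmin₂
  have hmono : m * ‖y₁ - y₂‖ ^ 2 ≤ ‖y₁ - y₂‖ * ‖c₁ - c₂‖ := calc
    m * ‖y₁ - y₂‖ ^ 2 ≤ ⟪y₁ - y₂, c₁ - c₂⟫ := by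
      simp only [inner_sub_left, inner_sub_right, norm_sub_rev y₂ y₁] at *
      linarith
    _ ≤ ‖y₁ - y₂‖ * ‖c₁ - c₂‖ := real_inner_le_norm _ _
  rcases (norm_nonneg (y₁ - y₂)).eq_or_lt with hzero | hpos
  · rw [← hzero, mul_zero]
    exact norm_nonneg _
  · nlinarith

end InnerProductSpace

theorem stmt17_general {E₁ E₂ : Type*}
    [NormedAddCommGroup E₁] [InnerProductSpace ℝ E₁]
    [NormedAddCommGroup E₂] [InnerProductSpace ℝ E₂]
    (Y : Set E₂) (hYcv : Convex ℝ Y)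
    (h : E₂ → ℝ) (μy : ℝ) (hμy : 0 < μy)
    (hsc : ConvexOn ℝ Set.univ (fun y => h y - μy / 2 * ‖y‖ ^ 2))
    (A : E₁ →L[ℝ] E₂) (x₁ x₂ : E₁) (y₁ y₂ : E₂)
    (hy₁ : y₁ ∈ Y) (hy₂ : y₂ ∈ Y)
    (hmax₁ : ∀ y ∈ Y, (inner ℝ y (A x₁) : ℝ) - h y ≤ (inner ℝ y₁ (A x₁) : ℝ) - h y₁)
    (hmax₂ : ∀ y ∈ Y, (inner ℝ y (A x₂) : ℝ) - h y ≤ (inner ℝ y₂ (A x₂) : ℝ) - h y₂) :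
    ‖y₁ - y₂‖ ≤ ‖A‖ / μy * ‖x₁ - x₂‖ := by
  have hstrong : StrongConvexOn Y μy h :=
    strongConvexOn_iff_convex.2 (hsc.subset (subset_univ Y) hYcv)
  have hlip := hstrong.mul_norm_sub_le_of_isMaxOn hy₁ hy₂ hmax₁ hmax₂
  rw [div_mul_eq_mul_div, le_div_iff₀ hμy, mul_comm]
  calc μy * ‖y₁ - y₂‖ ≤ ‖A x₁ - A x₂‖ := hlip
    _ = ‖A (x₁ - x₂)‖ := by rw [map_sub]
    _ ≤ ‖A‖ * ‖x₁ - x₂‖ := A.le_opNorm _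

/-- the argmax of a μy-strongly concave objective y ↦ ⟨y, Ax⟩ − h(y)
over a closed convex set is (‖A‖/μy)-Lipschitz in x. -/
theorem stmt17 {E₁ E₂ : Type*}
    [NormedAddCommGroup E₁] [InnerProductSpace ℝ E₁] [CompleteSpace E₁]
    [NormedAddCommGroup E₂] [InnerProductSpace ℝ E₂] [CompleteSpace E₂]
    (Y : Set E₂) (hYne : Y.Nonempty) (hYcl : IsClosed Y) (hYcv : Convex ℝ Y)
    (h : E₂ → ℝ) (μy : ℝ) (hμy : 0 < μy)
    (hsc : ConvexOn ℝ Set.univ (fun y => h y - μy / 2 * ‖y‖ ^ 2))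
    (A : E₁ →L[ℝ] E₂) (x₁ x₂ : E₁) (y₁ y₂ : E₂)
    (hy₁ : y₁ ∈ Y) (hy₂ : y₂ ∈ Y)
    (hmax₁ : ∀ y ∈ Y, (inner ℝ y (A x₁) : ℝ) - h y ≤ (inner ℝ y₁ (A x₁) : ℝ) - h y₁)
    (hmax₂ : ∀ y ∈ Y, (inner ℝ y (A x₂) : ℝ) - h y ≤ (inner ℝ y₂ (A x₂) : ℝ) - h y₂) :
    ‖y₁ - y₂‖ ≤ ‖A‖ / μy * ‖x₁ - x₂‖ :=
  stmt17_general Y hYcv h μy hμy hsc A x₁ x₂ y₁ y₂ hy₁ hy₂ hmax₁ hmax₂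
end
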